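/- arXiv:1712.08780 — 2 statements merged into one kernel-verified Lean document; each statement's English description precedes it below -/
import Mathlib

section
/- Let G be a graph and let E_1,...,E_k be subsets of E(G) with E_1 ∪ ... ∪ E_k = E(G). Let G_1,...,G_k be the isolate-free graphs with edge sets E_1,...,E_k respectively. Then γ_gr^t(G) ≤ γ_gr^t(G_1) + ... + γ_gr^t(G_k). -/
open SimpleGraph

/-- A legal open neighborhood sequence in `G`. -/
def IsOpenLegal {α : Type*} (G : SimpleGraph α) (L : List α) : Prop :=
  L.Nodup ∧ ∀ i : Fin L.length, ∃ w, G.Adj (L.get i) w ∧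
    ∀ j : Fin L.length, j < i → ¬ G.Adj (L.get j) w

/-- The Grundy total domination number of `G`. -/
noncomputable def grundyT {α : Type*} (G : SimpleGraph α) : ℕ :=
  sSup {n | ∃ L : List α, IsOpenLegal G L ∧ L.length = n}

/-- A legal closed neighborhood (dominating) sequence in `G`. -/
def IsClosedLegal {α : Type*} (G : SimpleGraph α) (L : List α) : Prop :=
  L.Nodup ∧ ∀ i : Fin L.length, ∃ w, (G.Adj (L.get i) w ∨ L.get i = w) ∧
    ∀ j : Fin L.length, j < i → ¬ (G.Adj (L.get j) w ∨ L.get j = w)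

/-- The Grundy domination number of `G`. -/
noncomputable def grundyDom {α : Type*} (G : SimpleGraph α) : ℕ :=
  sSup {n | ∃ L : List α, IsClosedLegal G L ∧ L.length = n}

/-- The direct (tensor) product of simple graphs. -/
def directProd {α β : Type*} (G : SimpleGraph α) (H : SimpleGraph β) : SimpleGraph (α × β) where
  Adj x y := G.Adj x.1 y.1 ∧ H.Adj x.2 y.2
  symm := ⟨fun _ _ h => ⟨h.1.symm, h.2.symm⟩⟩
  loopless := ⟨fun x h => G.loopless.irrefl x.1 h.1⟩

/-- The lexicographic product of simple graphs. -/
def lexProd {α β : Type*} (G : SimpleGraph α) (H : SimpleGraph β) : SimpleGraph (α × β) where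
  Adj x y := G.Adj x.1 y.1 ∨ (x.1 = y.1 ∧ H.Adj x.2 y.2)
  symm := by
    refine ⟨?_⟩
    rintro x y (h | ⟨h1, h2⟩)
    · exact Or.inl h.symm
    · exact Or.inr ⟨h1.symm, h2.symm⟩
  loopless := by
    refine ⟨?_⟩
    rintro x (h | ⟨_, h⟩)
    · exact G.loopless.irrefl _ h
    · exact H.loopless.irrefl _ h

/-- The strong product of simple graphs. -/
def strongProd {α β : Type*} (G : SimpleGraph α) (H : SimpleGraph β) : SimpleGraph (α × β) where
  Adj x y := (G.Adj x.1 y.1 ∧ x.2 = y.2) ∨ (x.1 = y.1 ∧ H.Adj x.2 y.2) ∨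
    (G.Adj x.1 y.1 ∧ H.Adj x.2 y.2)
  symm := by
    refine ⟨?_⟩
    rintro x y (⟨h, e⟩ | ⟨e, h⟩ | ⟨h1, h2⟩)
    · exact Or.inl ⟨h.symm, e.symm⟩
    · exact Or.inr (Or.inl ⟨e.symm, h.symm⟩)
    · exact Or.inr (Or.inr ⟨h1.symm, h2.symm⟩)
  loopless := by
    refine ⟨?_⟩
    rintro x (⟨h, _⟩ | ⟨_, h⟩ | ⟨h, _⟩)
    · exact G.loopless.irrefl _ h
    · exact H.loopless.irrefl _ h
    · exact G.loopless.irrefl _ h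

/-- The minimum number of complete bipartite subgraphs of `G` covering all edges of `G`. -/
noncomputable def bc {α : Type*} (G : SimpleGraph α) : ℕ :=
  sInf {k | ∃ A B : Fin k → Set α,
    (∀ i a b, a ∈ A i → b ∈ B i → G.Adj a b) ∧
    (∀ u v, G.Adj u v → ∃ i, (u ∈ A i ∧ v ∈ B i) ∨ (v ∈ A i ∧ u ∈ B i))}

/-- `aD G L` is the number of entries of `L` not adjacent to any earlier entry. -/
noncomputable def aD {α : Type*} (G : SimpleGraph α) (L : List α) : ℕ :=
  {i : Fin L.length | ∀ j : Fin L.length, j < i → ¬ G.Adj (L.get j) (L.get i)}.ncard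

/-- The vertex cover number of `G`. -/
noncomputable def vertexCoverNum {α : Type*} (G : SimpleGraph α) : ℕ :=
  sInf {n | ∃ S : Finset α, S.card = n ∧ ∀ u v, G.Adj u v → u ∈ S ∨ v ∈ S}

/-- The independence number of `G`. -/
noncomputable def indepNum {α : Type*} (G : SimpleGraph α) : ℕ :=
  sSup {n | ∃ S : Finset α, S.card = n ∧ ∀ u ∈ S, ∀ v ∈ S, ¬ G.Adj u v}

/-! Give each entry `v` of a legal sequence of `G` a footprint `w`, a neighbour of `v` adjacent to no
earlier entry, and put `v` into every `Gᵢ` containing the edge `vw`. Every entry lands somewhere,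
and the entries placed in `Gᵢ` form a legal sequence of `Gᵢ` with the same footprints, since an
earlier entry `Gᵢ`-adjacent to `w` would be `G`-adjacent to it. -/

theorem List.length_le_sum_countP {α ι : Type*} (s : Finset ι) (q : ι → α → Bool)
    (l : List α) (hl : ∀ x ∈ l, ∃ i ∈ s, q i x) :
    l.length ≤ ∑ i ∈ s, l.countP (q i) := by
  induction l with
  | nil => simp
  | cons x l ih =>
    obtain ⟨i, hi, hqi⟩ := hl x List.mem_cons_self
    have hx : 1 ≤ ∑ j ∈ s, if q j x then 1 else 0 :=
      (Finset.single_le_sum (fun _ _ => Nat.zero_le _) hi).trans' (by simp [hqi])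
    simp only [List.length_cons, List.countP_cons, Finset.sum_add_distrib]
    have := ih fun y hy => hl y (List.mem_cons_of_mem x hy)
    omega

/-- A legal open neighborhood sequence `P.map Prod.fst` together with a footprint `w` chosen for
each of its entries `v`: a neighbour of `v` adjacent to no earlier entry. -/
def IsFootprintList {α : Type*} (G : SimpleGraph α) (P : List (α × α)) : Prop :=
  (∀ p ∈ P, G.Adj p.1 p.2) ∧ P.Pairwise fun q p => ¬ G.Adj q.1 p.2

section OpenLegal

variable {α : Type*} {G H : SimpleGraph α}

theorem IsOpenLegal.length_le_grundyT [Finite α] {L : List α} (hL : IsOpenLegal G L) :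
    L.length ≤ grundyT G := by
  have := Fintype.ofFinite α
  refine le_csSup ⟨Fintype.card α, ?_⟩ ⟨L, hL, rfl⟩
  rintro _ ⟨M, hM, rfl⟩
  exact hM.1.length_le_card

theorem IsOpenLegal.exists_isFootprintList {L : List α} (hL : IsOpenLegal G L) :
    ∃ P, P.map Prod.fst = L ∧ IsFootprintList G P := by
  choose w hadj hnew using hL.2
  refine ⟨List.ofFn fun i => (L.get i, w i), by simp [List.map_ofFn, Function.comp_def], ?_, ?_⟩
  · simpa [List.mem_ofFn] using hadj
  · exact List.pairwise_ofFn.mpr fun j i hji => hnew i j hji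

theorem IsFootprintList.isOpenLegal {P : List (α × α)} (hP : IsFootprintList G P)
    (hnodup : (P.map Prod.fst).Nodup) : IsOpenLegal G (P.map Prod.fst) := by
  have hlen : (P.map Prod.fst).length = P.length := P.length_map _
  refine ⟨hnodup, fun i => ⟨(P.get (i.cast hlen)).2, ?_, fun j hji => ?_⟩⟩
  · simpa using hP.1 _ (P.get_mem (i.cast hlen))
  · simpa using List.pairwise_iff_get.mp hP.2 (j.cast hlen) (i.cast hlen) hji

theorem IsFootprintList.filter_adj [DecidableRel H.Adj] {P : List (α × α)}
    (hP : IsFootprintList G P) (hHG : H ≤ G) :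
    IsFootprintList H (P.filter fun p => H.Adj p.1 p.2) := by
  refine ⟨fun p hp => by simpa using (List.mem_filter.mp hp).2, ?_⟩
  exact (hP.2.imp fun h hH => h (hHG hH)).sublist List.filter_sublist

end OpenLegal

theorem grundyT_le_sum_of_edge_cover {α : Type*} [Fintype α] (G : SimpleGraph α)
    (k : ℕ) (Gs : Fin k → SimpleGraph α) (hle : ∀ i, Gs i ≤ G)
    (hcov : ∀ u v, G.Adj u v ↔ ∃ i, (Gs i).Adj u v) :
    grundyT G ≤ ∑ i, grundyT (Gs i) := by
  classical
  refine csSup_le' ?_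
  rintro _ ⟨_, hL, rfl⟩
  obtain ⟨P, rfl, hP⟩ := hL.exists_isFootprintList
  have hlegal (i : Fin k) :
      IsOpenLegal (Gs i) ((P.filter fun p => (Gs i).Adj p.1 p.2).map Prod.fst) :=
    (hP.filter_adj (hle i)).isOpenLegal (hL.1.sublist (List.filter_sublist.map _))
  calc (P.map Prod.fst).length = P.length := P.length_map _
    _ ≤ ∑ i, P.countP fun p => (Gs i).Adj p.1 p.2 :=
      P.length_le_sum_countP _ _ fun p hp => by simpa using (hcov p.1 p.2).mp (hP.1 p hp)
    _ ≤ ∑ i, grundyT (Gs i) := Finset.sum_le_sum fun i _ => by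
      simpa [List.countP_eq_length_filter] using (hlegal i).length_le_grundyT
end

section
/- If v_1 and v_2 are distinct vertices of a graph G with the same open neighborhood N(v_1) = N(v_2), then γ_gr^t(G) = γ_gr^t(G − v_2), where G − v_2 is the graph obtained by deleting v_2. -/
/-!
Mapping `v₂` to its twin `v₁` preserves adjacency in both arguments. A legal sequence never
contains two vertices with the same open neighbourhood, since the later one would have no new
neighbour, so this collapse maps legal sequences of `G` injectively to legal sequences of
`G - v₂` of the same length; the inclusion of `G - v₂` into `G` does the converse.
-/

open SimpleGraph

section
variable {α β : Type*} {G : SimpleGraph α} {H : SimpleGraph β} {L : List α}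

theorem IsOpenLegal.neighborSet_ne_of_lt (hL : IsOpenLegal G L) {i j : Fin L.length}
    (hij : i < j) : G.neighborSet (L.get i) ≠ G.neighborSet (L.get j) := by
  obtain ⟨w, hw, hfresh⟩ := hL.2 j
  intro h
  exact hfresh i hij (h ▸ hw : w ∈ G.neighborSet (L.get i))

theorem IsOpenLegal.injOn_neighborSet (hL : IsOpenLegal G L) :
    Set.InjOn G.neighborSet {x | x ∈ L} := by
  intro x hx y hy hxy
  obtain ⟨i, rfl⟩ := List.mem_iff_get.mp hx
  obtain ⟨j, rfl⟩ := List.mem_iff_get.mp hy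
  rcases lt_trichotomy i j with hij | rfl | hji
  · exact absurd hxy (hL.neighborSet_ne_of_lt hij)
  · rfl
  · exact absurd hxy.symm (hL.neighborSet_ne_of_lt hji)

theorem IsOpenLegal.map {f : α → β} (hf : ∀ x y, H.Adj (f x) (f y) ↔ G.Adj x y)
    (hL : IsOpenLegal G L) : IsOpenLegal H (L.map f) := by
  refine ⟨hL.1.map_on fun x hx y hy hxy => hL.injOn_neighborSet hx hy ?_, fun i => ?_⟩
  · ext w
    simp only [mem_neighborSet, ← hf, hxy]
  · obtain ⟨w, hw, hfresh⟩ := hL.2 (i.cast (L.length_map f))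
    refine ⟨f w, by simpa [hf] using hw, fun j hj => ?_⟩
    simpa [hf] using hfresh (j.cast (L.length_map f)) hj

theorem grundyT_eq_of_adj_iff {f : α → β} {g : β → α}
    (hf : ∀ x y, H.Adj (f x) (f y) ↔ G.Adj x y) (hg : ∀ x y, G.Adj (g x) (g y) ↔ H.Adj x y) :
    grundyT G = grundyT H := by
  unfold grundyT
  congr 1
  ext n
  constructor
  · rintro ⟨L, hL, rfl⟩
    exact ⟨L.map f, hL.map hf, L.length_map f⟩
  · rintro ⟨L, hL, rfl⟩
    exact ⟨L.map g, hL.map hg, L.length_map g⟩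

theorem SimpleGraph.adj_iff_of_neighborSet_eq {f : α → α}
    (hf : ∀ x, G.neighborSet (f x) = G.neighborSet x) (x y : α) :
    G.Adj (f x) (f y) ↔ G.Adj x y := by
  rw [← mem_neighborSet, hf, mem_neighborSet, adj_comm, ← mem_neighborSet, hf, mem_neighborSet,
    adj_comm]

end

theorem grundyT_delete_twin_general {α : Type*} (G : SimpleGraph α)
    (v₁ v₂ : α) (hne : v₁ ≠ v₂) (hN : G.neighborSet v₁ = G.neighborSet v₂) :
    grundyT G = grundyT (G.induce {v | v ≠ v₂}) := by
  classical
  let collapse : α → {v | v ≠ v₂} := fun x => if h : x = v₂ then ⟨v₁, hne⟩ else ⟨x, h⟩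
  have hcollapse : ∀ x, G.neighborSet (collapse x) = G.neighborSet x := by
    intro x
    by_cases h : x = v₂ <;> simp [collapse, h, hN]
  exact grundyT_eq_of_adj_iff (adj_iff_of_neighborSet_eq hcollapse) (fun _ _ => Iff.rfl)

theorem grundyT_delete_twin {α : Type*} [Fintype α] (G : SimpleGraph α)
    (v₁ v₂ : α) (hne : v₁ ≠ v₂) (hN : G.neighborSet v₁ = G.neighborSet v₂) :
    grundyT G = grundyT (G.induce {v | v ≠ v₂}) :=
  grundyT_delete_twin_general G v₁ v₂ hne hN
end
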